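/- Let q be real. (a) If 1 + k(1-q) ≠ 0 for all integers k with 0 ≤ k ≤ n, then the n-th iterate of z_1 starting at q equals the n-th iterate of μ∘ν at q: (z_1)^n(q) = (μ∘ν)^n(q) = (q + n(1-q))/(1 + n(1-q)). (b) If 2 - k(q-1) ≠ 0 for all integers k with 0 ≤ k ≤ 2m, then the 2m-th iterate of z_2 starting at q equals the m-th iterate of μ∘ν at q: (z_2)^{2m}(q) = (μ∘ν)^m(q) = (q + m(1-q))/(1 + m(1-q)). -/

import Mathlib

/-!
Both maps are Möbius transformations: `z₁` *is* `μ∘ν : s ↦ 1/(2-s)`, and `z₂ ∘ z₂ = μ∘ν` away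
from the pole `s = 3` of `z₂`. The iterates of `μ∘ν` have the closed form
`(q + n(1-q))/(1 + n(1-q))`; it equals `3` exactly when `2 - (2n+1)(q-1) = 0`, so the odd cases of
the hypothesis of (b) keep the `μ∘ν`-orbit away from the pole, and its even cases
`2 - 2k(q-1) = 2(1 + k(1-q))` give the hypothesis of (a) up to `m`.
-/

/-- The rational map `z_α(s) = (αs - (s-1))/(α - (s-1))`. -/
noncomputable def zMap (α s : ℝ) : ℝ := (α * s - (s - 1)) / (α - (s - 1))

/-- The multiplicative duality `μ(q) = 1/q`. -/
noncomputable def muDual (q : ℝ) : ℝ := 1 / q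

/-- The additive duality `ν(q) = 2 - q`. -/
def nuDual (q : ℝ) : ℝ := 2 - q

theorem Function.iterate_eq_iterate_of_forall_lt {α : Type*} {f g : α → α} {x : α} {n : ℕ}
    (h : ∀ j < n, f (g^[j] x) = g (g^[j] x)) : f^[n] x = g^[n] x := by
  induction n with
  | zero => rfl
  | succ n ih =>
    rw [iterate_succ_apply', iterate_succ_apply', ih fun j hj => h j (by omega),
      h n n.lt_succ_self]

theorem zMap_one : zMap 1 = muDual ∘ nuDual := by
  funext s
  simp only [zMap, muDual, nuDual, Function.comp_apply]
  ring_nf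

theorem zMap_two_apply (s : ℝ) : zMap 2 s = (1 + s) / (3 - s) := by
  unfold zMap
  congr 1 <;> ring

theorem zMap_two_zMap_two {s : ℝ} (hs : s ≠ 3) : zMap 2 (zMap 2 s) = muDual (nuDual s) := by
  have h3 : 3 - s ≠ 0 := sub_ne_zero.mpr hs.symm
  rw [zMap_two_apply, zMap_two_apply, muDual, nuDual,
    show 1 + (1 + s) / (3 - s) = 4 / (3 - s) by field_simp; ring,
    show 3 - (1 + s) / (3 - s) = 4 * (2 - s) / (3 - s) by field_simp; ring,
    div_div_div_cancel_right₀ h3, div_mul_cancel_left₀ four_ne_zero, one_div]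

theorem muDual_nuDual_closed_form_succ {q : ℝ} (n : ℕ) (hn : 1 + n * (1 - q) ≠ 0) :
    muDual (nuDual ((q + n * (1 - q)) / (1 + n * (1 - q))))
      = (q + (n + 1 : ℕ) * (1 - q)) / (1 + (n + 1 : ℕ) * (1 - q)) := by
  simp only [muDual, nuDual]
  rw [show 2 - (q + n * (1 - q)) / (1 + n * (1 - q))
      = (1 + (n + 1 : ℕ) * (1 - q)) / (1 + n * (1 - q)) by
    field_simp; push_cast; ring]
  rw [one_div_div]
  congr 1
  push_cast
  ring

theorem muDual_comp_nuDual_iterate {q : ℝ} {n : ℕ} (h : ∀ k < n, 1 + k * (1 - q) ≠ 0) :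
    (muDual ∘ nuDual)^[n] q = (q + n * (1 - q)) / (1 + n * (1 - q)) := by
  induction n with
  | zero => simp
  | succ n ih =>
    rw [Function.iterate_succ_apply', ih fun k hk => h k (by omega), Function.comp_apply,
      muDual_nuDual_closed_form_succ n (h n n.lt_succ_self)]

theorem one_add_mul_ne_zero_of_two_sub_two_mul {q : ℝ} (k : ℕ)
    (h : 2 - ((2 * k : ℕ) : ℝ) * (q - 1) ≠ 0) : 1 + k * (1 - q) ≠ 0 := fun hzero =>
  h (by push_cast; linear_combination 2 * hzero)

theorem muDual_comp_nuDual_iterate_ne_three {q : ℝ} {n : ℕ} (h : ∀ k ≤ 2 * n + 1,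
    2 - k * (q - 1) ≠ 0) : (muDual ∘ nuDual)^[n] q ≠ 3 := by
  have hden : ∀ k ≤ n, 1 + k * (1 - q) ≠ 0 := fun k hk =>
    one_add_mul_ne_zero_of_two_sub_two_mul k (h (2 * k) (by omega))
  rw [muDual_comp_nuDual_iterate fun k hk => hden k hk.le, Ne, div_eq_iff (hden n le_rfl)]
  intro h3
  exact h (2 * n + 1) le_rfl (by push_cast; linear_combination -h3)

theorem zMap_two_iterate_two_mul {q : ℝ} {m : ℕ} (h : ∀ k ≤ 2 * m, 2 - k * (q - 1) ≠ 0) :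
    (zMap 2)^[2 * m] q = (muDual ∘ nuDual)^[m] q := by
  rw [Function.iterate_mul]
  refine Function.iterate_eq_iterate_of_forall_lt fun j hj => ?_
  exact zMap_two_zMap_two <| muDual_comp_nuDual_iterate_ne_three fun k hk => h k (by omega)

/-- (a) The `n`-th iterate of `z_1` starting at `q` equals the `n`-th iterate of
`μ∘ν` at `q`, with closed form `(q + n(1-q))/(1 + n(1-q))`, provided
`1 + k(1-q) ≠ 0` for `0 ≤ k ≤ n`.
(b) The `2m`-th iterate of `z_2` starting at `q` equals the `m`-th iterate of
`μ∘ν` at `q`, with closed form `(q + m(1-q))/(1 + m(1-q))`, provided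
`2 - k(q-1) ≠ 0` for `0 ≤ k ≤ 2m`. -/
theorem zMap_iterates_vs_mu_nu (q : ℝ) (n m : ℕ) :
    ((∀ k : ℕ, k ≤ n → 1 + (k : ℝ) * (1 - q) ≠ 0) →
      (zMap 1)^[n] q = (muDual ∘ nuDual)^[n] q ∧
        (muDual ∘ nuDual)^[n] q
          = (q + (n : ℝ) * (1 - q)) / (1 + (n : ℝ) * (1 - q))) ∧
    ((∀ k : ℕ, k ≤ 2 * m → 2 - (k : ℝ) * (q - 1) ≠ 0) →
      (zMap 2)^[2 * m] q = (muDual ∘ nuDual)^[m] q ∧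
        (muDual ∘ nuDual)^[m] q
          = (q + (m : ℝ) * (1 - q)) / (1 + (m : ℝ) * (1 - q))) := by
  refine ⟨fun h => ⟨by rw [zMap_one], muDual_comp_nuDual_iterate fun k hk => h k hk.le⟩,
    fun h => ⟨zMap_two_iterate_two_mul h, muDual_comp_nuDual_iterate fun k hk =>
      one_add_mul_ne_zero_of_two_sub_two_mul k (h (2 * k) (by omega))⟩⟩
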